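/- arXiv:1406.3597 — 2 statements merged into one kernel-verified Lean document; each statement's English description precedes it below -/
import Mathlib

section
/- Suppose nonnegative reals N_1,…,N_n and O_1,…,O_n (with n ≥ 2) satisfy: (i) ∑_{l=1}^{n} (n·H_l − l·H_n)·N_l ≤ ∑_{l=1}^{n} (l·H_{n−l} + (n−l)·H_l)·O_l, and (ii) ∑_{l=1}^{n} H_l·N_l ≤ ∑_{l=1}^{n} H_l·O_l. Then with x = (n − H_n)/(H_n − 1), we have ∑_{l=1}^{n} N_l ≤ [(n+x)/(n+x−H_n)]·H((n+x)/2) · ∑_{l=1}^{n} O_l. -/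
/-!
Adding `x` times (ii) to (i) gives `∑ α_l N_l ≤ ∑ β_l O_l` with
`α_l = (n + x) H_l - l H_n` and `β_l = l H_{n-l} + (n - l + x) H_l`. Both coefficients are
controlled by the concavity of `H` on `[0, ∞)`, which holds because each integrand
`t ↦ (1 - u^t) / (1 - u)` is concave. The value of `x` makes `α_1 = α_n = n + x - H_n`, so
concavity along the chord from `1` to `n` gives `α_l ≥ n + x - H_n`. On the other side `β_l` is
a combination of two values of `H` with total weight `n + x`, so Jensen bounds it by
`(n + x) H(m)`, where the mean `m` is at most `(n + x) / 2`.
-/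

open MeasureTheory Finset Filter

noncomputable def harmonicR (n : ℕ) : ℝ := ∑ i ∈ Finset.range n, (1 : ℝ) / (i + 1)

noncomputable def Hext (k : ℝ) : ℝ := ∫ x in (0:ℝ)..1, (1 - x ^ k) / (1 - x)

noncomputable def harmonicIntegrand (t x : ℝ) : ℝ := (1 - x ^ t) / (1 - x)

section harmonicIntegrand

variable {t x : ℝ}

lemma harmonicIntegrand_natCast (m : ℕ) (hx : x ≠ 1) :
    harmonicIntegrand m x = ∑ i ∈ range m, x ^ i := by
  rw [harmonicIntegrand, Real.rpow_natCast, ← neg_div_neg_eq, neg_sub, neg_sub, geom_sum_eq hx]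

lemma harmonicIntegrand_nonneg (ht : 0 ≤ t) (hx : x ∈ Set.Ioo 0 1) :
    0 ≤ harmonicIntegrand t x :=
  div_nonneg (sub_nonneg.2 (Real.rpow_le_one hx.1.le hx.2.le ht)) (sub_nonneg.2 hx.2.le)

lemma monotone_harmonicIntegrand (hx : x ∈ Set.Ioo 0 1) : Monotone (harmonicIntegrand · x) :=
  fun _ _ hpq => div_le_div_of_nonneg_right
    (sub_le_sub_left (Real.rpow_le_rpow_of_exponent_ge hx.1 hx.2.le hpq) 1) (sub_nonneg.2 hx.2.le)

lemma concaveOn_harmonicIntegrand (hx : x ∈ Set.Ioo 0 1) :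
    ConcaveOn ℝ Set.univ (harmonicIntegrand · x) := by
  refine (((convexOn_rpow_left hx.1).neg.add_const 1).smul
    (inv_nonneg.2 (sub_nonneg.2 hx.2.le))).congr fun t _ => ?_
  simp only [Pi.add_apply, Pi.neg_apply, smul_eq_mul, harmonicIntegrand]
  ring

lemma intervalIntegrable_harmonicIntegrand (ht : 0 ≤ t) :
    IntervalIntegrable (harmonicIntegrand t) volume 0 1 := by
  have hpoly : IntervalIntegrable (fun x : ℝ => ∑ i ∈ range ⌈t⌉₊, x ^ i) volume 0 1 :=
    (continuous_finsetSum _ fun i _ => continuous_pow i).intervalIntegrable 0 1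
  have hmeas : Measurable (harmonicIntegrand t) := by unfold harmonicIntegrand; fun_prop
  refine hpoly.mono_fun' hmeas.aestronglyMeasurable ?_
  rw [Set.uIoc_of_le zero_le_one, ← Measure.restrict_congr_set Ioo_ae_eq_Ioc]
  filter_upwards [ae_restrict_mem measurableSet_Ioo] with x hx
  rw [Real.norm_of_nonneg (harmonicIntegrand_nonneg ht hx),
    ← harmonicIntegrand_natCast _ hx.2.ne]
  exact monotone_harmonicIntegrand hx (Nat.le_ceil t)

end harmonicIntegrand

lemma Hext_eq_integral (t : ℝ) : Hext t = ∫ x in (0:ℝ)..1, harmonicIntegrand t x := rfl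

lemma Hext_natCast (m : ℕ) : Hext m = harmonicR m := by
  rw [Hext_eq_integral, intervalIntegral.integral_congr_ae ((Measure.ae_ne volume 1).mono
      fun x hx _ => harmonicIntegrand_natCast m hx),
    intervalIntegral.integral_finsetSum fun i _ => (continuous_pow i).intervalIntegrable 0 1]
  simp [harmonicR, integral_pow]

lemma monotoneOn_Hext : MonotoneOn Hext (Set.Ici 0) := fun _ hp _ _ hpq =>
  intervalIntegral.integral_mono_on_of_le_Ioo zero_le_one
    (intervalIntegrable_harmonicIntegrand hp)
    (intervalIntegrable_harmonicIntegrand (le_trans hp hpq))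
    fun _ hx => monotone_harmonicIntegrand hx hpq

lemma concaveOn_Hext : ConcaveOn ℝ (Set.Ici 0) Hext := by
  refine ⟨convex_Ici 0, fun p hp q hq a b ha hb hab => ?_⟩
  have hpq : 0 ≤ a • p + b • q := add_nonneg (mul_nonneg ha hp) (mul_nonneg hb hq)
  simp only [Hext_eq_integral, smul_eq_mul, ← intervalIntegral.integral_const_mul]
  rw [← intervalIntegral.integral_add
    ((intervalIntegrable_harmonicIntegrand hp).const_mul a)
    ((intervalIntegrable_harmonicIntegrand hq).const_mul b)]
  exact intervalIntegral.integral_mono_on_of_le_Ioo zero_le_one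
    (((intervalIntegrable_harmonicIntegrand hp).const_mul a).add
      ((intervalIntegrable_harmonicIntegrand hq).const_mul b))
    (intervalIntegrable_harmonicIntegrand hpq)
    fun _ hx => (concaveOn_harmonicIntegrand hx).2 trivial trivial ha hb hab

lemma harmonicR_eq_harmonic (n : ℕ) : harmonicR n = harmonic n := by
  simp [harmonicR, harmonic]

lemma one_lt_harmonicR {n : ℕ} (hn : 2 ≤ n) : 1 < harmonicR n := by
  have h2 : harmonicR 2 = 3 / 2 := by norm_num [harmonicR, sum_range_succ]
  have := monotoneOn_Hext (Set.mem_Ici.2 (Nat.cast_nonneg 2)) (Set.mem_Ici.2 (Nat.cast_nonneg n))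
    (Nat.cast_le.2 hn)
  rw [Hext_natCast, Hext_natCast, h2] at this
  linarith

lemma harmonicR_lt_self {n : ℕ} (hn : 2 ≤ n) : harmonicR n < n := by
  have hn' : (1 : ℝ) < n := by exact_mod_cast hn
  calc harmonicR n ≤ 1 + Real.log n := harmonicR_eq_harmonic n ▸ harmonic_le_one_add_log n
    _ < n := by linarith [Real.log_lt_sub_one_of_pos (by linarith) hn'.ne']

lemma sub_one_mul_harmonicR_sub_one_le {l n : ℕ} (hl : 1 ≤ l) (hln : l ≤ n) :
    ((l : ℝ) - 1) * (harmonicR n - 1) ≤ ((n : ℝ) - 1) * (harmonicR l - 1) := by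
  rcases hln.eq_or_lt with rfl | hlt
  · rfl
  have hl' : (1 : ℝ) ≤ l := by exact_mod_cast hl
  have hln' : (l : ℝ) < n := by exact_mod_cast hlt
  have hn1 : (0 : ℝ) < n - 1 := by linarith
  have h := concaveOn_Hext.2 (Set.mem_Ici.2 zero_le_one) (Set.mem_Ici.2 (Nat.cast_nonneg n))
    (div_nonneg (sub_nonneg.2 hln'.le) hn1.le) (div_nonneg (sub_nonneg.2 hl') hn1.le)
    (by field_simp; ring : ((n : ℝ) - l) / (n - 1) + ((l : ℝ) - 1) / (n - 1) = 1)
  have hmid : ((n : ℝ) - l) / (n - 1) * 1 + ((l : ℝ) - 1) / (n - 1) * n = l := by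
    field_simp; ring
  have hHext1 : Hext 1 = 1 := by simpa [harmonicR] using Hext_natCast 1
  rw [smul_eq_mul, smul_eq_mul, smul_eq_mul, smul_eq_mul, hmid, hHext1, Hext_natCast,
    Hext_natCast, div_mul_eq_mul_div, div_mul_eq_mul_div,
    ← add_div, div_le_iff₀ hn1] at h
  linarith

lemma add_sub_harmonicR_le {l n : ℕ} {x : ℝ} (hl : 1 ≤ l) (hln : l ≤ n)
    (hHn : 1 < harmonicR n)
    (hx : ((n : ℝ) + x) * (harmonicR n - 1) = ((n : ℝ) - 1) * harmonicR n) :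
    (n : ℝ) + x - harmonicR n ≤ ((n : ℝ) + x) * harmonicR l - l * harmonicR n := by
  have hchord := mul_le_mul_of_nonneg_right (sub_one_mul_harmonicR_sub_one_le hl hln)
    (by linarith : 0 ≤ harmonicR n)
  refine le_of_mul_le_mul_left ?_ (sub_pos.2 hHn)
  linear_combination hchord - (harmonicR l - 1) * hx

lemma mul_Hext_sub_add_mul_Hext_le {s t x : ℝ} (hs : 0 ≤ s) (hst : s ≤ t) (hx : 0 ≤ x) :
    s * Hext (t - s) + (t - s + x) * Hext s ≤ (t + x) * Hext ((t + x) / 2) := by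
  rcases (add_nonneg (hs.trans hst) hx).eq_or_lt with h0 | hpos
  · obtain ⟨rfl, rfl, rfl⟩ : s = 0 ∧ t = 0 ∧ x = 0 := by
      refine ⟨?_, ?_, ?_⟩ <;> linarith
    simp
  have hjensen := concaveOn_Hext.2 (Set.mem_Ici.2 (sub_nonneg.2 hst)) (Set.mem_Ici.2 hs)
    (div_nonneg hs hpos.le) (div_nonneg (by linarith) hpos.le)
    (by field_simp; ring : s / (t + x) + (t - s + x) / (t + x) = 1)
  simp only [smul_eq_mul] at hjensen
  have hmean : s / (t + x) * (t - s) + (t - s + x) / (t + x) * s ≤ (t + x) / 2 := by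
    rw [div_mul_eq_mul_div, div_mul_eq_mul_div, ← add_div, div_le_div_iff₀ hpos two_pos]
    -- `(t + x)² - 2 s (2 (t - s) + x) = (t - 2 s)² + 2 x (t - s) + x²`
    nlinarith [sq_nonneg (t - 2 * s), mul_nonneg hx (sub_nonneg.2 hst), sq_nonneg x]
  calc s * Hext (t - s) + (t - s + x) * Hext s
      = (t + x) * (s / (t + x) * Hext (t - s) + (t - s + x) / (t + x) * Hext s) := by
        field_simp
    _ ≤ (t + x) * Hext ((t + x) / 2) := by
        refine mul_le_mul_of_nonneg_left (hjensen.trans ?_) hpos.le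
        exact monotoneOn_Hext (Set.mem_Ici.2 (by positivity)) (Set.mem_Ici.2 (by positivity))
          hmean

lemma mul_sum_le_mul_sum_of_le_of_le {ι : Type*} (s : Finset ι) {α β N O : ι → ℝ}
    {A B : ℝ}
    (hα : ∀ i ∈ s, A ≤ α i) (hβ : ∀ i ∈ s, β i ≤ B) (hN : ∀ i ∈ s, 0 ≤ N i)
    (hO : ∀ i ∈ s, 0 ≤ O i) (h : ∑ i ∈ s, α i * N i ≤ ∑ i ∈ s, β i * O i) :
    A * ∑ i ∈ s, N i ≤ B * ∑ i ∈ s, O i := by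
  rw [mul_sum, mul_sum]
  calc ∑ i ∈ s, A * N i ≤ ∑ i ∈ s, α i * N i :=
        sum_le_sum fun i hi => mul_le_mul_of_nonneg_right (hα i hi) (hN i hi)
    _ ≤ ∑ i ∈ s, β i * O i := h
    _ ≤ ∑ i ∈ s, B * O i :=
        sum_le_sum fun i hi => mul_le_mul_of_nonneg_right (hβ i hi) (hO i hi)

theorem stmt13 (n : ℕ) (hn : 2 ≤ n) (N O : ℕ → ℝ)
    (hN : ∀ l, 0 ≤ N l) (hO : ∀ l, 0 ≤ O l)
    (x : ℝ) (hx : x = ((n : ℝ) - harmonicR n) / (harmonicR n - 1))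
    (h1 : ∑ l ∈ Finset.Icc 1 n, ((n : ℝ) * harmonicR l - (l : ℝ) * harmonicR n) * N l ≤
          ∑ l ∈ Finset.Icc 1 n, ((l : ℝ) * harmonicR (n - l) + ((n : ℝ) - (l : ℝ)) * harmonicR l) * O l)
    (h2 : ∑ l ∈ Finset.Icc 1 n, harmonicR l * N l ≤ ∑ l ∈ Finset.Icc 1 n, harmonicR l * O l) :
    ∑ l ∈ Finset.Icc 1 n, N l ≤
      (((n : ℝ) + x) / (((n : ℝ) + x) - harmonicR n)) * Hext (((n : ℝ) + x) / 2) *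
        ∑ l ∈ Finset.Icc 1 n, O l := by
  have hH1 := one_lt_harmonicR hn
  have hHn := harmonicR_lt_self hn
  have hx0 : 0 ≤ x := hx ▸ div_nonneg (by linarith) (by linarith)
  have hxH : ((n : ℝ) + x) * (harmonicR n - 1) = ((n : ℝ) - 1) * harmonicR n := by
    rw [hx, add_mul, div_mul_cancel₀ _ (by linarith)]; ring
  have hcomb : ∑ l ∈ Icc 1 n, (((n : ℝ) + x) * harmonicR l - l * harmonicR n) * N l ≤
      ∑ l ∈ Icc 1 n, (l * harmonicR (n - l) + ((n : ℝ) - l + x) * harmonicR l) * O l := by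
    have h := add_le_add h1 (mul_le_mul_of_nonneg_left h2 hx0)
    rw [mul_sum, mul_sum, ← sum_add_distrib, ← sum_add_distrib] at h
    exact (sum_congr rfl fun _ _ => by ring).trans_le
      (h.trans_eq (sum_congr rfl fun _ _ => by ring))
  have hbound := mul_sum_le_mul_sum_of_le_of_le (Icc 1 n)
    (fun l hl => add_sub_harmonicR_le (mem_Icc.1 hl).1 (mem_Icc.1 hl).2 hH1 hxH)
    (fun l hl => by
      have h := mul_Hext_sub_add_mul_Hext_le (Nat.cast_nonneg l)
        (Nat.cast_le.2 (mem_Icc.1 hl).2) hx0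
      rwa [← Nat.cast_sub (mem_Icc.1 hl).2, Hext_natCast, Hext_natCast,
        Nat.cast_sub (mem_Icc.1 hl).2] at h)
    (fun l _ => hN l) (fun l _ => hO l) hcomb
  rw [div_mul_eq_mul_div, div_mul_eq_mul_div, le_div_iff₀ (by linarith)]
  linarith
end

section
/- In a Shapley network design game with n players, the cost of any Nash equilibrium minimizing the potential function is at most H_n times the cost of a social optimum; consequently PoS(G) ≤ H_n. -/
open Finset

variable {n : ℕ} {E : Type*}

/-- number of players using edge e in profile P -/
def nUsers [Fintype (Fin n)] [DecidableEq E] (P : Fin n → Finset E) (e : E) : ℕ :=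
  (Finset.univ.filter fun j => e ∈ P j).card

/-- edges used in profile P -/
def usedEdges [DecidableEq E] (P : Fin n → Finset E) : Finset E :=
  Finset.univ.biUnion P

/-- cost of player i -/
noncomputable def playerCost [DecidableEq E] (c : E → ℝ) (P : Fin n → Finset E) (i : Fin n) : ℝ :=
  ∑ e ∈ P i, c e / (nUsers P e : ℝ)

/-- social cost -/
noncomputable def socialCost [DecidableEq E] (c : E → ℝ) (P : Fin n → Finset E) : ℝ :=
  ∑ e ∈ usedEdges P, c e

/-- potential function -/
noncomputable def potential [DecidableEq E] (c : E → ℝ) (P : Fin n → Finset E) : ℝ :=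
  ∑ e ∈ usedEdges P, harmonicR (nUsers P e) * c e


/-! Every used edge has load `1 ≤ k ≤ n` and `1 ≤ H_k ≤ H_n`, so the potential lies between the
social cost and `H_n` times it; minimality of the potential at `N` then gives
`cost N ≤ Φ N ≤ Φ O ≤ H_n · cost O`. -/

lemma harmonicR_mono : Monotone harmonicR := fun _ _ hab =>
  Finset.sum_le_sum_of_subset_of_nonneg (Finset.range_subset_range.2 hab)
    (fun _ _ _ => by positivity)

lemma one_le_harmonicR {k : ℕ} (hk : 1 ≤ k) : 1 ≤ harmonicR k := by
  simpa [harmonicR] using harmonicR_mono hk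

section Profile

variable [DecidableEq E] (P : Fin n → Finset E)

lemma one_le_nUsers_of_mem_usedEdges {e : E} (he : e ∈ usedEdges P) : 1 ≤ nUsers P e := by
  obtain ⟨j, -, hj⟩ := Finset.mem_biUnion.1 he
  exact Finset.card_pos.2 ⟨j, Finset.mem_filter.2 ⟨Finset.mem_univ j, hj⟩⟩

lemma nUsers_le (e : E) : nUsers P e ≤ n :=
  (Finset.card_filter_le _ _).trans_eq (Finset.card_fin n)

variable {c : E → ℝ}

lemma socialCost_le_potential (hc : ∀ e, 0 ≤ c e) : socialCost c P ≤ potential c P :=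
  Finset.sum_le_sum fun e he =>
    le_mul_of_one_le_left (hc e) (one_le_harmonicR (one_le_nUsers_of_mem_usedEdges P he))

lemma potential_le_harmonicR_mul_socialCost (hc : ∀ e, 0 ≤ c e) :
    potential c P ≤ harmonicR n * socialCost c P := by
  rw [socialCost, Finset.mul_sum]
  exact Finset.sum_le_sum fun e _ =>
    mul_le_mul_of_nonneg_right (harmonicR_mono (nUsers_le P e)) (hc e)

end Profile

theorem stmt18_general (n : ℕ) (E : Type*) [DecidableEq E]
    (c : E → ℝ) (hc : ∀ e, 0 ≤ c e)
    (S : Fin n → Set (Finset E)) (N O : Fin n → Finset E)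
    (hOS : ∀ i, O i ∈ S i)
    (hmin : ∀ P : Fin n → Finset E, (∀ j, P j ∈ S j) → potential c N ≤ potential c P) :
    socialCost c N ≤ harmonicR n * socialCost c O :=
  calc socialCost c N ≤ potential c N := socialCost_le_potential N hc
    _ ≤ potential c O := hmin O hOS
    _ ≤ harmonicR n * socialCost c O := potential_le_harmonicR_mul_socialCost O hc

theorem stmt18 (n : ℕ) (hn : 1 ≤ n) (E : Type*) [Fintype E] [DecidableEq E]
    (c : E → ℝ) (hc : ∀ e, 0 ≤ c e)
    (S : Fin n → Set (Finset E)) (N O : Fin n → Finset E)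
    (hNS : ∀ i, N i ∈ S i) (hOS : ∀ i, O i ∈ S i)
    (hmin : ∀ P : Fin n → Finset E, (∀ j, P j ∈ S j) → potential c N ≤ potential c P) :
    socialCost c N ≤ harmonicR n * socialCost c O :=
  stmt18_general n E c hc S N O hOS hmin
end
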